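/- arXiv:1803.10843 — 2 statements merged into one kernel-verified Lean document; each statement's English description precedes it below -/
import Mathlib

section
/- If a set A ⊆ ℕ computes a diagonally noncomputable function, then A computes a fixed point free function (a function f with W_{f(n)} ≠ W_n for all n). -/
open Part

/-- The `n`-th partial computable function in a standard numbering. -/
def phi (n : ℕ) : ℕ →. ℕ := (Denumerable.ofNat Nat.Partrec.Code n).eval

/-- `W n` is the domain of the `n`-th partial computable function. -/
def Wdom (n : ℕ) : Set ℕ := {x | (phi n x).Dom}

/-- Partial functions computable relative to a partial oracle `O`. -/
inductive RecursiveIn' (O : ℕ →. ℕ) : (ℕ →. ℕ) → Prop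
  | oracle : RecursiveIn' O O
  | zero : RecursiveIn' O (pure 0)
  | succ : RecursiveIn' O Nat.succ
  | left : RecursiveIn' O ↑fun n : ℕ => n.unpair.1
  | right : RecursiveIn' O ↑fun n : ℕ => n.unpair.2
  | pair {f g} : RecursiveIn' O f → RecursiveIn' O g →
      RecursiveIn' O fun n => Nat.pair <$> f n <*> g n
  | comp {f g} : RecursiveIn' O f → RecursiveIn' O g →
      RecursiveIn' O fun n => g n >>= f
  | prec {f g} : RecursiveIn' O f → RecursiveIn' O g →
      RecursiveIn' O (Nat.unpaired fun a n =>
        n.rec (f a) fun y IH => do let i ← IH; g (Nat.pair a (Nat.pair y i)))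
  | rfind {f} : RecursiveIn' O f →
      RecursiveIn' O fun a => Nat.rfind fun n => (fun m => m = 0) <$> f (Nat.pair a n)

open Classical in
/-- The characteristic function of a set `A` as a partial oracle. -/
noncomputable def chi (A : Set ℕ) : ℕ →. ℕ := fun n => Part.some (if n ∈ A then 1 else 0)

/-- A total function is computable relative to the set `A`. -/
def ComputableInSet (A : Set ℕ) (f : ℕ → ℕ) : Prop := RecursiveIn' (chi A) ↑f

/-- A partial function is computable relative to the set `A`. -/
def PartComputableInSet (A : Set ℕ) (f : ℕ →. ℕ) : Prop := RecursiveIn' (chi A) f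

/-- Turing reducibility between sets of naturals. -/
def TuringLe (A B : Set ℕ) : Prop := RecursiveIn' (chi B) (chi A)

/-- The halting set ∅′. -/
def K0 : Set ℕ := {n | (phi n n).Dom}

/-- `A` is computably enumerable. -/
def CE (A : Set ℕ) : Prop := REPred (· ∈ A)

/-!
Given a DNC function `g`, let `t` be computable with `φ_{t n}` constantly equal to the first
element found in the enumeration of `W_n`, and let `f n` be an index of the singleton
`{g (t n)}`. If `W_{f n} = W_n`, then `W_n = {g (t n)}`, so the search finds `g (t n)` and
`φ_{t n}(t n) = g (t n)`, contradicting diagonal noncomputability.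
-/

open Nat.Partrec (Code)
open Nat.Partrec.Code

theorem Nat.Partrec.recursiveIn' {O : ℕ →. ℕ} {f : ℕ →. ℕ} (hf : Nat.Partrec f) :
    RecursiveIn' O f := by
  induction hf with
  | zero => exact .zero
  | succ => exact .succ
  | left => exact .left
  | right => exact .right
  | pair _ _ ih₁ ih₂ => exact .pair ih₁ ih₂
  | comp _ _ ih₁ ih₂ => exact .comp ih₁ ih₂
  | prec _ _ ih₁ ih₂ => exact .prec ih₁ ih₂
  | rfind _ ih => exact .rfind ih

theorem Computable.recursiveIn' {O : ℕ →. ℕ} {f : ℕ → ℕ} (hf : Computable f) :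
    RecursiveIn' O f :=
  (Partrec.nat_iff.mp hf.partrec).recursiveIn'

theorem RecursiveIn'.comp_total {O : ℕ →. ℕ} {f g : ℕ → ℕ} (hf : RecursiveIn' O f)
    (hg : RecursiveIn' O g) : RecursiveIn' O ↑(f ∘ g) := by
  have h : (↑(f ∘ g) : ℕ →. ℕ) = fun n => (g : ℕ →. ℕ) n >>= (f : ℕ →. ℕ) :=
    funext fun n => (Part.bind_some (g n) fun x => Part.some (f x)).symm
  exact h ▸ hf.comp hg

/-- The s-m-n theorem for the numbering `phi`. -/
theorem exists_computable_phi_eq {f : ℕ → ℕ →. ℕ} (hf : Partrec₂ f) :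
    ∃ t : ℕ → ℕ, Computable t ∧ ∀ n, phi (t n) = f n := by
  obtain ⟨c, hc⟩ := exists_code.mp (Partrec.nat_iff.mp
    (hf.comp (Computable.fst.comp Computable.unpair) (Computable.snd.comp Computable.unpair)))
  refine ⟨fun n => Encodable.encode (curry c n),
    (Primrec.encode.comp (primrec₂_curry.comp (Primrec.const c) Primrec.id)).to_comp, ?_⟩
  intro n
  funext x
  simp [phi, eval_curry, hc]

theorem mem_Wdom_iff_exists_evaln {n x : ℕ} :
    x ∈ Wdom n ↔ ∃ k, (evaln k (Denumerable.ofNat Code n) x).isSome := by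
  simp only [Wdom, phi, Set.mem_ofPred_eq, Part.dom_iff_mem, evaln_complete,
    Option.isSome_iff_exists]
  exact ⟨fun ⟨y, k, h⟩ => ⟨k, y, h⟩, fun ⟨k, y, h⟩ => ⟨y, k, h⟩⟩

def someMemWdom (n : ℕ) : Part ℕ :=
  Nat.rfindOpt fun p => (evaln p.unpair.1 (Denumerable.ofNat Code n) p.unpair.2).map
    fun _ => p.unpair.2

theorem someMemWdom_partrec : Partrec someMemWdom := by
  refine Partrec.rfindOpt (Primrec.to_comp ?_)
  have hk : Primrec fun q : ℕ × ℕ => q.2.unpair.1 :=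
    Primrec.fst.comp (Primrec.unpair.comp Primrec.snd)
  have hx : Primrec fun q : ℕ × ℕ => q.2.unpair.2 :=
    Primrec.snd.comp (Primrec.unpair.comp Primrec.snd)
  have hc : Primrec fun q : ℕ × ℕ => Denumerable.ofNat Code q.1 :=
    (Primrec.ofNat Code).comp Primrec.fst
  exact Primrec.option_map (primrec_evaln.comp ((hk.pair hc).pair hx)) (hx.comp Primrec.fst).to₂

theorem mem_Wdom_of_mem_someMemWdom {n x : ℕ} (hx : x ∈ someMemWdom n) : x ∈ Wdom n := by
  obtain ⟨p, hp⟩ := Nat.rfindOpt_spec hx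
  obtain ⟨y, hy, rfl⟩ := Option.mem_map.mp hp
  exact mem_Wdom_iff_exists_evaln.mpr ⟨p.unpair.1, Option.isSome_iff_exists.mpr ⟨y, hy⟩⟩

theorem someMemWdom_dom {n : ℕ} (h : (Wdom n).Nonempty) : (someMemWdom n).Dom := by
  obtain ⟨x, hx⟩ := h
  obtain ⟨k, hk⟩ := mem_Wdom_iff_exists_evaln.mp hx
  obtain ⟨y, hy⟩ := Option.isSome_iff_exists.mp hk
  exact Nat.rfindOpt_dom.mpr ⟨Nat.pair k x, x, by simp [hy]⟩

theorem someMemWdom_eq_some_of_Wdom_eq_singleton {n v : ℕ} (h : Wdom n = {v}) :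
    someMemWdom n = Part.some v := by
  have hdom := someMemWdom_dom (h ▸ Set.singleton_nonempty v)
  have hmem := mem_Wdom_of_mem_someMemWdom (Part.get_mem hdom)
  rw [h, Set.mem_singleton_iff] at hmem
  exact Part.eq_some_iff.mpr (hmem ▸ Part.get_mem hdom)

theorem exists_computable_Wdom_eq_singleton :
    ∃ F : ℕ → ℕ, Computable F ∧ ∀ m, Wdom (F m) = {m} := by
  have hf : Partrec₂ fun m x : ℕ => Nat.rfind fun _ => Part.some (decide (x = m)) :=
    Partrec.rfind (Computable.partrec (Primrec.to_comp
      (Primrec.eq.comp (Primrec.snd.comp Primrec.fst) (Primrec.fst.comp Primrec.fst)).decide))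
  obtain ⟨F, hF, hphi⟩ := exists_computable_phi_eq hf
  refine ⟨F, hF, fun m => Set.ext fun x => ?_⟩
  change (phi (F m) x).Dom ↔ x = m
  rw [hphi]
  exact Nat.rfind_dom.trans (by simp)

theorem dnc_computes_fpf (A : Set ℕ)
    (h : ∃ g : ℕ → ℕ, ComputableInSet A g ∧ ∀ e, phi e e ≠ Part.some (g e)) :
    ∃ f : ℕ → ℕ, ComputableInSet A f ∧ ∀ n, Wdom (f n) ≠ Wdom n := by
  obtain ⟨g, hgA, hdnc⟩ := h
  obtain ⟨t, ht, hphit⟩ := exists_computable_phi_eq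
    (f := fun n _ => someMemWdom n) (someMemWdom_partrec.comp Computable.fst).to₂
  obtain ⟨F, hF, hWF⟩ := exists_computable_Wdom_eq_singleton
  refine ⟨F ∘ g ∘ t, hF.recursiveIn'.comp_total (hgA.comp_total ht.recursiveIn'), ?_⟩
  intro n hEq
  apply hdnc (t n)
  rw [hphit]
  exact someMemWdom_eq_some_of_Wdom_eq_singleton (hEq.symm.trans (hWF _))
end

section
/- If a set A ⊆ ℕ computes a fixed point free function, then A computes a diagonally noncomputable function. -/
open Part

/-
A fixed point free `f` is turned into a DNC function by composing it with a computable `h`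
such that `φ_{h(e)} = φ_{φ_e(e)}` whenever `φ_e(e)↓` (obtained from the s-m-n theorem). If
`φ_e(e) = f(h(e))`, then `φ_{h(e)} = φ_{f(h(e))}`, so `h(e)` would be a fixed point of `f`.
-/

namespace RecursiveIn'

variable {O : ℕ →. ℕ}

theorem of_partrec {f : ℕ →. ℕ} (hf : Nat.Partrec f) : RecursiveIn' O f := by
  induction hf with
  | zero => exact zero
  | succ => exact succ
  | left => exact left
  | right => exact right
  | pair _ _ ihf ihg => exact pair ihf ihg
  | comp _ _ ihf ihg => exact comp ihf ihg
  | prec _ _ ihf ihg => exact prec ihf ihg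
  | rfind _ ihf => exact rfind ihf

theorem comp_total_s5 {f g : ℕ → ℕ} (hf : RecursiveIn' O f) (hg : RecursiveIn' O g) :
    RecursiveIn' O ↑(f ∘ g) := by
  have hbind : (fun n => (g : ℕ →. ℕ) n >>= (f : ℕ →. ℕ)) = ((f ∘ g : ℕ → ℕ) : ℕ →. ℕ) :=
    funext fun n => Part.bind_some (g n) (f : ℕ →. ℕ)
  exact hbind ▸ comp hf hg

end RecursiveIn'

theorem ComputableInSet.comp_computable {A : Set ℕ} {f g : ℕ → ℕ} (hf : ComputableInSet A f)
    (hg : Computable g) : ComputableInSet A (f ∘ g) :=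
  RecursiveIn'.comp_total_s5 hf (RecursiveIn'.of_partrec (Partrec.nat_iff.1 hg))

theorem phi_encode (c : Nat.Partrec.Code) : phi (Encodable.encode c) = c.eval := by
  simp only [phi, Denumerable.ofNat_encode]

theorem phi_partrec₂ : Partrec₂ phi :=
  Nat.Partrec.Code.eval_part.comp ((Computable.ofNat _).comp Computable.fst) Computable.snd

theorem exists_computable_phi_eq_phi_of_phi_self_eq :
    ∃ h : ℕ → ℕ, Computable h ∧ ∀ e k, phi e e = Part.some k → phi (h e) = phi k := by
  have hdiag : Nat.Partrec fun n => (phi n.unpair.1 n.unpair.1).bind fun k => phi k n.unpair.2 :=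
    Partrec.nat_iff.1 <| Partrec.bind
      (phi_partrec₂.comp (Computable.fst.comp Computable.unpair)
        (Computable.fst.comp Computable.unpair))
      (phi_partrec₂.comp Computable.snd ((Computable.snd.comp Computable.unpair).comp
        Computable.fst)).to₂
  obtain ⟨c, hc⟩ := Nat.Partrec.Code.exists_code.1 hdiag
  refine ⟨fun e => Encodable.encode (c.curry e),
    (Primrec.encode.comp (Nat.Partrec.Code.primrec₂_curry.comp (Primrec.const c)
      Primrec.id)).to_comp, fun e k hek => ?_⟩
  funext x
  simp [phi_encode, Nat.Partrec.Code.eval_curry, hc, hek]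

theorem fpf_computes_dnc (A : Set ℕ)
    (h : ∃ f : ℕ → ℕ, ComputableInSet A f ∧ ∀ n, Wdom (f n) ≠ Wdom n) :
    ∃ g : ℕ → ℕ, ComputableInSet A g ∧ ∀ e, phi e e ≠ Part.some (g e) := by
  obtain ⟨f, hf, hfpf⟩ := h
  obtain ⟨h, hcomp, hphi⟩ := exists_computable_phi_eq_phi_of_phi_self_eq
  refine ⟨f ∘ h, hf.comp_computable hcomp, fun e he => hfpf (h e) ?_⟩
  simp only [Wdom, hphi e _ he, Function.comp_apply]
end
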